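/- arXiv:1111.0862 — 3 statements merged into one kernel-verified Lean document; each statement's English description precedes it below -/
import Mathlib

section
/- Let r₀,...,r₄, c₀,...,c₄, r₀',...,r₄', c₀',...,c₄' be rationals, with all costs positive. For X ⊆ {1,2,3}, define Ratio(ρ_X) = (Σ_{i∈X∪{0,4}} r_i)/(Σ_{i∈X∪{0,4}} c_i) and Ratio(ρ'_X) = (Σ_{i∈X∪{0,4}} r'_i)/(Σ_{i∈X∪{0,4}} c'_i). If Ratio(ρ_X) = Ratio(ρ'_X) for all proper subsets X ⊊ {1,2,3}, then Ratio(ρ_{1,2,3}) = Ratio(ρ'_{1,2,3}). -/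
/-- If the ratios agree on all proper subsets of the three loops, they agree on the full word. -/
theorem ratio_pumping_subsets (r c r' c' : Fin 5 → ℚ)
    (hc : ∀ i, 0 < c i) (hc' : ∀ i, 0 < c' i)
    (h : ∀ X : Finset (Fin 5), X ⊂ ({1, 2, 3} : Finset (Fin 5)) →
      (∑ i ∈ X ∪ {0, 4}, r i) / (∑ i ∈ X ∪ {0, 4}, c i)
        = (∑ i ∈ X ∪ {0, 4}, r' i) / (∑ i ∈ X ∪ {0, 4}, c' i)) :
    (∑ i ∈ ({1, 2, 3} : Finset (Fin 5)) ∪ {0, 4}, r i)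
        / (∑ i ∈ ({1, 2, 3} : Finset (Fin 5)) ∪ {0, 4}, c i)
      = (∑ i ∈ ({1, 2, 3} : Finset (Fin 5)) ∪ {0, 4}, r' i)
        / (∑ i ∈ ({1, 2, 3} : Finset (Fin 5)) ∪ {0, 4}, c' i) := by
  have h0 := h ∅ (by decide)
  have h1 := h {1} (by decide)
  have h2 := h {2} (by decide)
  have h3 := h {3} (by decide)
  have h12 := h {1, 2} (by decide)
  have h13 := h {1, 3} (by decide)
  have h23 := h {2, 3} (by decide)
  rw [show (∅ : Finset (Fin 5)) ∪ {0, 4} = {0, 4} from by decide] at h0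
  rw [show ({1} : Finset (Fin 5)) ∪ {0, 4} = {0, 1, 4} from by decide] at h1
  rw [show ({2} : Finset (Fin 5)) ∪ {0, 4} = {0, 2, 4} from by decide] at h2
  rw [show ({3} : Finset (Fin 5)) ∪ {0, 4} = {0, 3, 4} from by decide] at h3
  rw [show ({1, 2} : Finset (Fin 5)) ∪ {0, 4} = {0, 1, 2, 4} from by decide] at h12
  rw [show ({1, 3} : Finset (Fin 5)) ∪ {0, 4} = {0, 1, 3, 4} from by decide] at h13
  rw [show ({2, 3} : Finset (Fin 5)) ∪ {0, 4} = {0, 2, 3, 4} from by decide] at h23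
  rw [show ({1, 2, 3} : Finset (Fin 5)) ∪ {0, 4} = {0, 1, 2, 3, 4} from by decide]
  simp only [Finset.sum_insert, Finset.mem_insert, Finset.mem_singleton,
    Finset.sum_singleton, show ((0 : Fin 5) ≠ 1) from by decide,
    show ((0 : Fin 5) ≠ 2) from by decide, show ((0 : Fin 5) ≠ 3) from by decide,
    show ((0 : Fin 5) ≠ 4) from by decide, show ((1 : Fin 5) ≠ 2) from by decide,
    show ((1 : Fin 5) ≠ 3) from by decide, show ((1 : Fin 5) ≠ 4) from by decide,
    show ((2 : Fin 5) ≠ 3) from by decide, show ((2 : Fin 5) ≠ 4) from by decide,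
    show ((3 : Fin 5) ≠ 4) from by decide, false_or, or_false, not_false_iff,
    or_self] at h0 h1 h2 h3 h12 h13 h23 ⊢
  have p0 := hc 0; have p1 := hc 1; have p2 := hc 2; have p3 := hc 3; have p4 := hc 4
  have q0 := hc' 0; have q1 := hc' 1; have q2 := hc' 2; have q3 := hc' 3; have q4 := hc' 4
  rw [div_eq_div_iff (by linarith) (by linarith)] at h0 h1 h2 h3 h12 h13 h23 ⊢
  linear_combination h12 + h13 + h23 - h1 - h2 - h3 + h0
end

section
/- Three loop repetitions do not suffice for the ratio pumping lemma: there exist rationals (with positive costs) r₀,...,r₃, c₀,...,c₃ and r₀',...,r₃', c₀',...,c₃' — namely (r,c) = (2,2),(2,1),(2,2),(1,1) and (r',c') = (1,2),(2,1),(1,1),(2,1) — such that removing any nonempty subset of the middle segments {1,2} yields equal ratios, i.e., (r₀+r₃)/(c₀+c₃) = (r₀'+r₃')/(c₀'+c₃'), (r₀+r₁+r₃)/(c₀+c₁+c₃) = (r₀'+r₁'+r₃')/(c₀'+c₁'+c₃'), (r₀+r₂+r₃)/(c₀+c₂+c₃) = (r₀'+r₂'+r₃')/(c₀'+c₂'+c₃'),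 yet the full ratios differ: (r₀+r₁+r₂+r₃)/(c₀+c₁+c₂+c₃) ≠ (r₀'+r₁'+r₂'+r₃')/(c₀'+c₁'+c₂'+c₃'). -/
/-- Three loop repetitions do not suffice for the ratio pumping lemma: concrete counterexample. -/
theorem ratio_three_repetitions_insufficient :
    ∃ r c r' c' : Fin 4 → ℚ,
      r = ![2, 2, 2, 1] ∧ c = ![2, 1, 2, 1] ∧ r' = ![1, 2, 1, 2] ∧ c' = ![2, 1, 1, 1] ∧
      (∀ i, 0 < c i) ∧ (∀ i, 0 < c' i) ∧
      (r 0 + r 3) / (c 0 + c 3) = (r' 0 + r' 3) / (c' 0 + c' 3) ∧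
      (r 0 + r 1 + r 3) / (c 0 + c 1 + c 3) = (r' 0 + r' 1 + r' 3) / (c' 0 + c' 1 + c' 3) ∧
      (r 0 + r 2 + r 3) / (c 0 + c 2 + c 3) = (r' 0 + r' 2 + r' 3) / (c' 0 + c' 2 + c' 3) ∧
      (r 0 + r 1 + r 2 + r 3) / (c 0 + c 1 + c 2 + c 3)
        ≠ (r' 0 + r' 1 + r' 2 + r' 3) / (c' 0 + c' 1 + c' 2 + c' 3) := by
  refine ⟨_, _, _, _, rfl, rfl, rfl, rfl, ?_⟩
  simp only [Matrix.cons_val]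
  norm_num [Fin.forall_fin_succ]
end

section
/- Every functional weighted V-automaton with n states is equivalent to an unambiguous weighted V-automaton with at most n·2ⁿ states: given a total order on transitions, the automaton that guesses a run on the first component and tracks on the second component the set of states reachable by lexicographically greater runs accepts, for each word in the domain, exactly one run — the one corresponding to the lexicographically least accepting run of the original automaton — and that run has the same value. -/
/-- A nondeterministic weighted automaton with state set `Fin n` over alphabet `A`,
with integer weights on transitions. -/
structure NWA (A : Type*) (n : ℕ) where
  init : Fin n
  final : Set (Fin n)
  trans : Set (Fin n × A × Fin n)
  wt : Fin n × A × Fin n → ℤ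

/-- `ρ` is a run of `M` on the word `w`. -/
def NWA.IsRun {A : Type*} {n : ℕ} (M : NWA A n) (w : List A)
    (ρ : Fin (w.length + 1) → Fin n) : Prop :=
  ρ 0 = M.init ∧ ∀ i : Fin w.length, (ρ i.castSucc, w.get i, ρ i.succ) ∈ M.trans

/-- `ρ` is an accepting run of `M` on `w`. -/
def NWA.IsAccRun {A : Type*} {n : ℕ} (M : NWA A n) (w : List A)
    (ρ : Fin (w.length + 1) → Fin n) : Prop :=
  M.IsRun w ρ ∧ ρ (Fin.last w.length) ∈ M.final

/-- The value of a run under the measure function `V` on weight sequences. -/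
def NWA.runValue {A : Type*} {n : ℕ} (M : NWA A n) (V : List ℤ → ℚ) (w : List A)
    (ρ : Fin (w.length + 1) → Fin n) : ℚ :=
  V (List.ofFn fun i : Fin w.length => M.wt (ρ i.castSucc, w.get i, ρ i.succ))

/-- `M` is functional for measure `V`: all accepting runs on a word have the same value. -/
def NWA.Functional {A : Type*} {n : ℕ} (M : NWA A n) (V : List ℤ → ℚ) : Prop :=
  ∀ (w : List A) (ρ ρ' : Fin (w.length + 1) → Fin n),
    M.IsAccRun w ρ → M.IsAccRun w ρ' → M.runValue V w ρ = M.runValue V w ρ'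

/-- `M` is unambiguous: every word has at most one accepting run. -/
def NWA.Unambiguous {A : Type*} {n : ℕ} (M : NWA A n) : Prop :=
  ∀ (w : List A) (ρ ρ' : Fin (w.length + 1) → Fin n),
    M.IsAccRun w ρ → M.IsAccRun w ρ' → ρ = ρ'

/-- `M` and `M'` are equivalent for measure `V`: same domain and same values. -/
def NWA.Equivalent {A : Type*} {n m : ℕ} (M : NWA A n) (M' : NWA A m)
    (V : List ℤ → ℚ) : Prop :=
  (∀ w : List A, (∃ ρ, M.IsAccRun w ρ) ↔ (∃ ρ', M'.IsAccRun w ρ')) ∧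
  (∀ (w : List A) ρ ρ', M.IsAccRun w ρ → M'.IsAccRun w ρ' →
    M.runValue V w ρ = M'.runValue V w ρ')

namespace UnambAux

open Classical in
/-- Lexicographic "strictly less" on runs. -/
def LexLt {n m : ℕ} (τ ρ : Fin m → Fin n) : Prop :=
  ∃ k : Fin m, (∀ j, j < k → τ j = ρ j) ∧ τ k < ρ k

lemma lexLt_trans {n m : ℕ} {a b c : Fin m → Fin n} (h1 : LexLt a b) (h2 : LexLt b c) :
    LexLt a c := by
  obtain ⟨N₁, lt_N₁, ab⟩ := h1
  obtain ⟨N₂, lt_N₂, bc⟩ := h2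
  rcases lt_trichotomy N₁ N₂ with H | rfl | H
  · exact ⟨N₁, fun j hj => (lt_N₁ _ hj).trans (lt_N₂ _ (hj.trans H)), lt_N₂ _ H ▸ ab⟩
  · exact ⟨N₁, fun j hj => (lt_N₁ _ hj).trans (lt_N₂ _ hj), ab.trans bc⟩
  · exact ⟨N₂, fun j hj => (lt_N₁ _ (hj.trans H)).trans (lt_N₂ _ hj), (lt_N₁ _ H).symm ▸ bc⟩

lemma lexLt_irrefl {n m : ℕ} (a : Fin m → Fin n) : ¬ LexLt a a := by
  rintro ⟨k, -, hk⟩; exact lt_irrefl _ hk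

lemma exists_lexLt_min {n m : ℕ} (S : Set (Fin m → Fin n)) (hS : S.Nonempty) :
    ∃ ρ ∈ S, ∀ τ ∈ S, ¬ LexLt τ ρ := by
  haveI : IsTrans (Fin m → Fin n) LexLt := ⟨fun _ _ _ => lexLt_trans⟩
  haveI : IsIrrefl (Fin m → Fin n) LexLt := ⟨lexLt_irrefl⟩
  exact (Finite.wellFounded_of_trans_of_irrefl LexLt).has_min S hS

lemma lexLt_total {n m : ℕ} {τ ρ : Fin m → Fin n} (h : τ ≠ ρ) : LexLt τ ρ ∨ LexLt ρ τ := by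
  classical
  have hne : ∃ k : ℕ, ∃ hk : k < m, τ ⟨k, hk⟩ ≠ ρ ⟨k, hk⟩ := by
    by_contra h'
    push_neg at h'
    exact h (funext fun j => by simpa using h' j j.isLt)
  obtain ⟨hk, hne'⟩ := Nat.find_spec hne
  have hmin : ∀ j : Fin m, (j : ℕ) < Nat.find hne → τ j = ρ j := by
    intro j hj
    have := Nat.find_min hne hj
    push_neg at this
    simpa using this j.isLt
  rcases lt_or_gt_of_ne hne' with hlt | hlt
  · exact Or.inl ⟨⟨Nat.find hne, hk⟩, fun j hj => hmin j hj, hlt⟩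
  · exact Or.inr ⟨⟨Nat.find hne, hk⟩, fun j hj => (hmin j hj).symm, hlt⟩

variable {A : Type*} {n : ℕ}

/-- One step of the tracking of lexicographically smaller runs. -/
def step (M : NWA A n) (a : A) (p p' : Fin n) (P : Set (Fin n)) : Set (Fin n) :=
  {q' | (∃ q ∈ P, (q, a, q') ∈ M.trans) ∨ ((p, a, q') ∈ M.trans ∧ q' < p')}

/-- The sets tracked along a reference run `ρ`. -/
def track (M : NWA A n) (w : List A) (ρ : Fin (w.length + 1) → Fin n) : ℕ → Set (Fin n)
  | 0 => ∅
  | i + 1 =>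
    if h : i < w.length then
      step M (w.get ⟨i, h⟩) (ρ ⟨i, by omega⟩) (ρ ⟨i + 1, by omega⟩) (track M w ρ i)
    else ∅

lemma track_succ (M : NWA A n) (w : List A) (ρ : Fin (w.length + 1) → Fin n) {i : ℕ}
    (h : i < w.length) :
    track M w ρ (i + 1) =
      step M (w.get ⟨i, h⟩) (ρ ⟨i, by omega⟩) (ρ ⟨i + 1, by omega⟩) (track M w ρ i) := by
  rw [track, dif_pos h]

set_option maxHeartbeats 1000000 in
/-- Invariant: `track M w ρ i` is the set of states reachable at time `i` by partial runs
that are lexicographically strictly smaller than `ρ`. -/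
lemma mem_track_iff (M : NWA A n) (w : List A) (ρ : Fin (w.length + 1) → Fin n)
    (hρ : M.IsRun w ρ) :
    ∀ (i : ℕ) (hi : i ≤ w.length) (q : Fin n),
      q ∈ track M w ρ i ↔
        ∃ τ : Fin (w.length + 1) → Fin n, τ 0 = M.init ∧
          (∀ j : Fin w.length, (j : ℕ) < i → (τ j.castSucc, w.get j, τ j.succ) ∈ M.trans) ∧
          τ ⟨i, by omega⟩ = q ∧
          ∃ k : ℕ, ∃ hk : k ≤ i,
            (∀ (j : ℕ) (hj : j < k), τ ⟨j, by omega⟩ = ρ ⟨j, by omega⟩) ∧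
            τ ⟨k, by omega⟩ < ρ ⟨k, by omega⟩ := by
  intro i
  induction i with
  | zero =>
    intro hi q
    constructor
    · intro h; exact absurd h (Set.notMem_empty q)
    · rintro ⟨τ, h0, -, -, k, hk, -, hlt⟩
      obtain rfl : k = 0 := Nat.le_zero.mp hk
      simp only [Fin.mk_zero, h0, hρ.1] at hlt
      exact absurd hlt (lt_irrefl _)
  | succ i IH =>
    intro hi q
    have hi' : i < w.length := by omega
    have hil : i ≤ w.length := by omega
    rw [track_succ M w ρ hi']
    constructor
    · rintro (⟨q₀, hq₀, htr⟩ | ⟨htr, hlt⟩)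
      · obtain ⟨τ, h0, htrans, hτi, k, hk, hagree, hklt⟩ := (IH hil q₀).1 hq₀
        refine ⟨fun j => if (j : ℕ) = i + 1 then q else τ j, ?_, ?_, ?_, k, by omega, ?_, ?_⟩
        · beta_reduce
          rw [if_neg (show ¬ ((0 : Fin (w.length + 1)) : ℕ) = i + 1 by simp)]
          exact h0
        · intro j hj
          rcases Nat.lt_or_ge (j : ℕ) i with hji | hji
          · beta_reduce
            rw [if_neg (show ¬ ((j.castSucc : Fin (w.length + 1)) : ℕ) = i + 1 from
                by simp only [Fin.coe_castSucc]; omega),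
              if_neg (show ¬ ((j.succ : Fin (w.length + 1)) : ℕ) = i + 1 from
                by simp only [Fin.val_succ]; omega)]
            exact htrans j hji
          · have hje : (j : ℕ) = i := by omega
            have hjeq : j = ⟨i, hi'⟩ := Fin.ext hje
            subst hjeq
            beta_reduce
            rw [show (((⟨i, hi'⟩ : Fin w.length).castSucc : Fin (w.length + 1)) : ℕ) = i from rfl,
              show (((⟨i, hi'⟩ : Fin w.length).succ : Fin (w.length + 1)) : ℕ) = i + 1 from rfl,
              if_neg (show ¬ (i : ℕ) = i + 1 by omega), if_pos (rfl : (i + 1 : ℕ) = i + 1)]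
            have hq0 : τ (Fin.castSucc ⟨i, hi'⟩) = q₀ := hτi
            rw [hq0]
            exact htr
        · exact if_pos rfl
        · intro j hj
          beta_reduce
          rw [if_neg (show ¬ (j : ℕ) = i + 1 by omega)]
          exact hagree j hj
        · beta_reduce
          rw [if_neg (show ¬ (k : ℕ) = i + 1 by omega)]
          exact hklt
      · refine ⟨fun j => if (j : ℕ) = i + 1 then q else ρ j, ?_, ?_, ?_, i + 1, le_rfl, ?_, ?_⟩
        · beta_reduce
          rw [if_neg (show ¬ ((0 : Fin (w.length + 1)) : ℕ) = i + 1 by simp)]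
          exact hρ.1
        · intro j hj
          rcases Nat.lt_or_ge (j : ℕ) i with hji | hji
          · beta_reduce
            rw [if_neg (show ¬ ((j.castSucc : Fin (w.length + 1)) : ℕ) = i + 1 from
                by simp only [Fin.coe_castSucc]; omega),
              if_neg (show ¬ ((j.succ : Fin (w.length + 1)) : ℕ) = i + 1 from
                by simp only [Fin.val_succ]; omega)]
            exact hρ.2 j
          · have hje : (j : ℕ) = i := by omega
            have hjeq : j = ⟨i, hi'⟩ := Fin.ext hje
            subst hjeq
            beta_reduce
            rw [show (((⟨i, hi'⟩ : Fin w.length).castSucc : Fin (w.length + 1)) : ℕ) = i from rfl,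
              show (((⟨i, hi'⟩ : Fin w.length).succ : Fin (w.length + 1)) : ℕ) = i + 1 from rfl,
              if_neg (show ¬ (i : ℕ) = i + 1 by omega), if_pos (rfl : (i + 1 : ℕ) = i + 1)]
            exact htr
        · exact if_pos rfl
        · intro j hj
          beta_reduce
          rw [if_neg (show ¬ (j : ℕ) = i + 1 by omega)]
        · beta_reduce
          rw [if_pos (rfl : (i + 1 : ℕ) = i + 1)]
          exact hlt
    · rintro ⟨τ, h0, htrans, hτi, k, hk, hagree, hklt⟩
      rcases Nat.lt_or_ge k (i + 1) with hki | hki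
      · have hki' : k ≤ i := by omega
        left
        refine ⟨τ ⟨i, by omega⟩,
          (IH hil _).2 ⟨τ, h0, fun j hj => htrans j (by omega), rfl, k, hki', hagree,
            hklt⟩, ?_⟩
        have htr := htrans ⟨i, hi'⟩ (by simpa using Nat.lt_succ_self i)
        have e2 : τ (Fin.succ ⟨i, hi'⟩) = q := hτi
        rw [e2] at htr
        exact htr
      · have hki' : k = i + 1 := by omega
        subst hki'
        right
        have hτ_eq : τ ⟨i, by omega⟩ = ρ ⟨i, by omega⟩ := hagree i (by omega)
        constructor
        · have htr := htrans ⟨i, hi'⟩ (by simpa using Nat.lt_succ_self i)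
          have e1 : τ (Fin.castSucc ⟨i, hi'⟩) = ρ ⟨i, by omega⟩ := hτ_eq
          have e2 : τ (Fin.succ ⟨i, hi'⟩) = q := hτi
          rw [e1, e2] at htr
          exact htr
        · rw [← hτi]
          exact hklt

/-- The unambiguous automaton obtained by the subset construction. -/
def mkUnamb (M : NWA A n) {N : ℕ} (e : (Fin n × Set (Fin n)) ≃ Fin N) : NWA A N where
  init := e (M.init, ∅)
  final := {s | (e.symm s).1 ∈ M.final ∧ (e.symm s).2 ∩ M.final = ∅}
  trans := {t | ((e.symm t.1).1, t.2.1, (e.symm t.2.2).1) ∈ M.trans ∧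
      (e.symm t.2.2).2 = step M t.2.1 (e.symm t.1).1 (e.symm t.2.2).1 (e.symm t.1).2}
  wt := fun t => M.wt ((e.symm t.1).1, t.2.1, (e.symm t.2.2).1)

section

variable (M : NWA A n) {N : ℕ} (e : (Fin n × Set (Fin n)) ≃ Fin N)
  (w : List A)

/-- Projection of a run of `mkUnamb` to a run of `M`. -/
def proj (σ : Fin (w.length + 1) → Fin N) : Fin (w.length + 1) → Fin n :=
  fun i => (e.symm (σ i)).1

lemma proj_isRun {σ : Fin (w.length + 1) → Fin N}
    (hσ : (mkUnamb M e).IsRun w σ) : M.IsRun w (proj e w σ) := by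
  have h0 : e.symm (σ 0) = (M.init, ∅) := by
    rw [hσ.1]; exact e.symm_apply_apply _
  refine ⟨?_, fun j => (hσ.2 j).1⟩
  show (e.symm (σ 0)).1 = M.init
  rw [h0]

lemma run_track {σ : Fin (w.length + 1) → Fin N}
    (hσ : (mkUnamb M e).IsRun w σ) :
    ∀ (i : ℕ) (hi : i ≤ w.length),
      (e.symm (σ ⟨i, by omega⟩)).2 = track M w (proj e w σ) i := by
  have h0 : e.symm (σ 0) = (M.init, ∅) := by
    rw [hσ.1]; exact e.symm_apply_apply _
  intro i
  induction i with
  | zero =>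
    intro hi
    rw [Fin.mk_zero, h0]
    rfl
  | succ i IH =>
    intro hi
    have hi' : i < w.length := by omega
    have htr := (hσ.2 ⟨i, hi'⟩).2
    have e1 : (Fin.castSucc ⟨i, hi'⟩ : Fin (w.length + 1)) = ⟨i, by omega⟩ := rfl
    have e2 : (Fin.succ ⟨i, hi'⟩ : Fin (w.length + 1)) = ⟨i + 1, by omega⟩ := rfl
    rw [e1, e2] at htr
    rw [htr, track_succ M w _ hi', IH (by omega)]
    rfl

lemma acc_min {σ : Fin (w.length + 1) → Fin N}
    (hσ : (mkUnamb M e).IsAccRun w σ) :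
    ∀ τ, M.IsAccRun w τ → ¬ LexLt τ (proj e w σ) := by
  rintro τ hτ ⟨k, hagree, hklt⟩
  have hρ : M.IsRun w (proj e w σ) := proj_isRun M e w hσ.1
  have hlast : (Fin.last w.length) = (⟨w.length, by omega⟩ : Fin (w.length + 1)) := rfl
  have hmem : τ (Fin.last w.length) ∈ track M w (proj e w σ) w.length := by
    rw [mem_track_iff M w _ hρ w.length le_rfl]
    refine ⟨τ, hτ.1.1, fun j _ => hτ.1.2 j, by rw [← hlast], (k : ℕ),
      Nat.lt_succ_iff.mp k.isLt, ?_, ?_⟩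
    · intro j hj
      exact hagree ⟨j, by omega⟩ (by simpa [Fin.lt_def] using hj)
    · have : (⟨(k : ℕ), by omega⟩ : Fin (w.length + 1)) = k := rfl
      rw [this]
      exact hklt
  have hfin := hσ.2
  have h2 : (e.symm (σ (Fin.last w.length))).2 = track M w (proj e w σ) w.length := by
    rw [hlast]
    exact run_track M e w hσ.1 w.length le_rfl
  have : τ (Fin.last w.length) ∈ (e.symm (σ (Fin.last w.length))).2 ∩ M.final := by
    rw [h2]
    exact ⟨hmem, hτ.2⟩
  rw [hfin.2] at this
  exact this

lemma min_acc {ρ : Fin (w.length + 1) → Fin n} (hρ : M.IsAccRun w ρ)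
    (hmin : ∀ τ, M.IsAccRun w τ → ¬ LexLt τ ρ) :
    (mkUnamb M e).IsAccRun w (fun i => e (ρ i, track M w ρ (i : ℕ))) := by
  have hsymm : ∀ i, e.symm (e (ρ i, track M w ρ (i : ℕ))) = (ρ i, track M w ρ (i : ℕ)) :=
    fun i => e.symm_apply_apply _
  refine ⟨⟨?_, ?_⟩, ?_, ?_⟩
  · show e (ρ 0, track M w ρ 0) = e (M.init, ∅)
    rw [hρ.1.1]
    rfl
  · intro j
    constructor
    · show ((e.symm (e _)).1, w.get j, (e.symm (e _)).1) ∈ M.trans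
      rw [hsymm, hsymm]
      exact hρ.1.2 j
    · show (e.symm (e _)).2 = step M (w.get j) (e.symm (e _)).1 (e.symm (e _)).1 (e.symm (e _)).2
      rw [hsymm, hsymm]
      show track M w ρ ((j : ℕ) + 1) = step M (w.get j) (ρ j.castSucc) (ρ j.succ)
        (track M w ρ (j : ℕ))
      rw [track_succ M w ρ j.isLt]
      have e1 : (⟨(j : ℕ), by omega⟩ : Fin (w.length + 1)) = j.castSucc := rfl
      have e2 : (⟨(j : ℕ) + 1, by omega⟩ : Fin (w.length + 1)) = j.succ := rfl
      have e3 : (⟨(j : ℕ), j.isLt⟩ : Fin w.length) = j := rfl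
      rw [e1, e2, e3]
  · show (e.symm (e _)).1 ∈ M.final
    rw [hsymm]
    exact hρ.2
  · show (e.symm (e _)).2 ∩ M.final = ∅
    rw [hsymm]
    rw [Set.eq_empty_iff_forall_notMem]
    rintro q ⟨hq, hqF⟩
    have hlv : ((Fin.last w.length : Fin (w.length + 1)) : ℕ) = w.length := rfl
    rw [hlv] at hq
    rw [mem_track_iff M w ρ hρ.1 w.length le_rfl] at hq
    obtain ⟨τ, h0, htrans, hτm, k, hk, hagree, hklt⟩ := hq
    have hτacc : M.IsAccRun w τ := by
      refine ⟨⟨h0, fun j => htrans j j.isLt⟩, ?_⟩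
      have : (Fin.last w.length) = (⟨w.length, by omega⟩ : Fin (w.length + 1)) := rfl
      rw [this, hτm]
      exact hqF
    refine hmin τ hτacc ⟨⟨k, by omega⟩, ?_, hklt⟩
    intro j hj
    have : τ ⟨(j : ℕ), by omega⟩ = ρ ⟨(j : ℕ), by omega⟩ := hagree (j : ℕ) (by simpa [Fin.lt_def] using hj)
    simpa using this

end

end UnambAux

/-- Every functional weighted V-automaton with n states is equivalent to an
unambiguous weighted V-automaton with at most n·2ⁿ states. -/
theorem functional_to_unambiguous (A : Type*) (V : List ℤ → ℚ) (n : ℕ)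
    (M : NWA A n) (hfun : M.Functional V) :
    ∃ M' : NWA A (n * 2 ^ n), M'.Unambiguous ∧ M.Equivalent M' V := by
  classical
  have hcard : Fintype.card (Fin n × Set (Fin n)) = n * 2 ^ n := by simp
  let e : (Fin n × Set (Fin n)) ≃ Fin (n * 2 ^ n) :=
    (Fintype.equivFin _).trans (finCongr hcard)
  refine ⟨UnambAux.mkUnamb M e, ?_, ?_, ?_⟩
  · intro w σ σ' hσ hσ'
    have hacc : M.IsAccRun w (UnambAux.proj e w σ) :=
      ⟨UnambAux.proj_isRun M e w hσ.1, hσ.2.1⟩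
    have hacc' : M.IsAccRun w (UnambAux.proj e w σ') :=
      ⟨UnambAux.proj_isRun M e w hσ'.1, hσ'.2.1⟩
    have heq : UnambAux.proj e w σ = UnambAux.proj e w σ' := by
      by_contra hne
      rcases UnambAux.lexLt_total hne with h | h
      · exact UnambAux.acc_min M e w hσ' _ hacc h
      · exact UnambAux.acc_min M e w hσ _ hacc' h
    funext i
    apply e.symm.injective
    refine Prod.ext ?_ ?_
    · show UnambAux.proj e w σ i = UnambAux.proj e w σ' i
      rw [heq]
    · have hi' : (i : ℕ) ≤ w.length := Nat.lt_succ_iff.mp i.isLt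
      have h1 := UnambAux.run_track M e w hσ.1 (i : ℕ) hi'
      have h2 := UnambAux.run_track M e w hσ'.1 (i : ℕ) hi'
      have hi : (⟨(i : ℕ), by omega⟩ : Fin (w.length + 1)) = i := rfl
      rw [hi] at h1 h2
      show (e.symm (σ i)).2 = (e.symm (σ' i)).2
      rw [h1, h2, heq]
  · intro w
    constructor
    · rintro ⟨ρ₀, hρ₀⟩
      obtain ⟨ρ, hρS, hmin⟩ :=
        UnambAux.exists_lexLt_min {τ | M.IsAccRun w τ} ⟨ρ₀, hρ₀⟩
      exact ⟨_, UnambAux.min_acc M e w hρS (fun τ h => hmin τ h)⟩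
    · rintro ⟨σ, hσ⟩
      exact ⟨UnambAux.proj e w σ, UnambAux.proj_isRun M e w hσ.1, hσ.2.1⟩
  · intro w ρ σ hρ hσ
    have hacc : M.IsAccRun w (UnambAux.proj e w σ) :=
      ⟨UnambAux.proj_isRun M e w hσ.1, hσ.2.1⟩
    have h := hfun w _ _ hρ hacc
    rw [h]
    rfl
end
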